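/- Let G and A be abelian groups and let z : G⁴ → A be a normalized cubical 3-cocycle, i.e. z satisfies the cocycle identity z(x,y,w,t) + z(x',y',w',t') − z(x+x', y+y', w+w', t+t') + z(x,w,x',w') + z(y,t,y',t') − z(x+y, w+t, x'+y', w'+t') = z(x,y,x',y') + z(w,t,w',t') − z(x+w, y+t, x'+w', y'+t') for all arguments, together with the normalization conditions z(x,y,0,0) = z(0,0,x,y) = z(x,0,0,y) = z(0,x,0,y) = z(x,0,y,0) = 0. Then z is antisymmetric in its middle two arguments: z(x,y,w,t) + z(x,w,y,t) = 0 for all x, y, w, t ∈ G. -/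

import Mathlib

/-!
Let `s(x, y, w, t) = z(x, y, w, t) + z(x, w, y, t)`. Specialising the cocycle identity so that
only one entry of the first cube is nonzero expresses how `z` changes when `a` is added to one
argument, through correction terms `z(a, 0, ·, ·)` and `z(0, a, ·, ·)`. For the first argument
these corrections are antisymmetric in `y, w`, and the corrections for the second and third
arguments cancel each other after swapping `y, w`. So `s` is invariant under translation of its
first argument and of its middle pair, hence `s(x, y, w, t) = s(0, 0, 0, t) = 2 z(0, 0, 0, t) = 0`.
-/

section

variable {G A : Type*} [AddCommGroup G] [AddCommGroup A]

def IsCubicalCocycle (z : G → G → G → G → A) : Prop :=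
  ∀ x y w t x' y' w' t',
    z x y w t + z x' y' w' t' - z (x + x') (y + y') (w + w') (t + t')
      + z x w x' w' + z y t y' t'
      - z (x + y) (w + t) (x' + y') (w' + t')
    = z x y x' y' + z w t w' t' - z (x + w) (y + t) (x' + w') (y' + t')

namespace IsCubicalCocycle

variable {z : G → G → G → G → A}

theorem add_first (hz : IsCubicalCocycle z) (h1 : ∀ x y, z x y 0 0 = 0)
    (h2 : ∀ x y, z 0 0 x y = 0) (a x y w t : G) :
    z (a + x) y w t = z x y w t + z a 0 x w - z a 0 x y
      - z a 0 (x + y) (w + t) + z a 0 (x + w) (y + t) := by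
  have h := hz a 0 0 0 x y w t
  simp only [zero_add, add_zero, h1, h2] at h
  linear_combination (norm := abel) -h

theorem add_second (hz : IsCubicalCocycle z) (h1 : ∀ x y, z x y 0 0 = 0)
    (h2 : ∀ x y, z 0 0 x y = 0) (a x y w t : G) :
    z x (a + y) w t = z x y w t + z a 0 y t - z 0 a x y
      - z a 0 (x + y) (w + t) + z 0 a (x + w) (y + t) := by
  have h := hz 0 a 0 0 x y w t
  simp only [zero_add, add_zero, h1, h2] at h
  linear_combination (norm := abel) -h

theorem add_third (hz : IsCubicalCocycle z) (h2 : ∀ x y, z 0 0 x y = 0) (a x y w t : G) :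
    z x y (a + w) t = z x y w t + z 0 a x w - z a 0 w t
      - z 0 a (x + y) (w + t) + z a 0 (x + w) (y + t) := by
  have h := hz 0 0 a 0 x y w t
  simp only [zero_add, add_zero, h2] at h
  linear_combination (norm := abel) -h

theorem add_swap_middle_of_add_first (hz : IsCubicalCocycle z) (h1 : ∀ x y, z x y 0 0 = 0)
    (h2 : ∀ x y, z 0 0 x y = 0) (a x y w t : G) :
    z (a + x) y w t + z (a + x) w y t = z x y w t + z x w y t := by
  rw [hz.add_first h1 h2 a x y w t, hz.add_first h1 h2 a x w y t]
  abel

theorem add_swap_middle_of_add_second (hz : IsCubicalCocycle z) (h1 : ∀ x y, z x y 0 0 = 0)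
    (h2 : ∀ x y, z 0 0 x y = 0) (a x y w t : G) :
    z x (a + y) w t + z x w (a + y) t = z x y w t + z x w y t := by
  rw [hz.add_second h1 h2 a x y w t, hz.add_third h2 a x w y t]
  abel

theorem add_swap_middle_eq_zero (hz : IsCubicalCocycle z) (h1 : ∀ x y, z x y 0 0 = 0)
    (h2 : ∀ x y, z 0 0 x y = 0) (x y w t : G) :
    z x y w t + z x w y t = 0 := by
  calc z x y w t + z x w y t = z 0 y w t + z 0 w y t := by
        simpa using hz.add_swap_middle_of_add_first h1 h2 x 0 y w t
    _ = z 0 0 w t + z 0 w 0 t := by simpa using hz.add_swap_middle_of_add_second h1 h2 y 0 0 w t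
    _ = z 0 0 0 t + z 0 0 0 t := by
        simpa [add_comm] using hz.add_swap_middle_of_add_second h1 h2 w 0 0 0 t
    _ = 0 := by rw [h2, add_zero]

end IsCubicalCocycle

end

theorem stmt_5_general {G A : Type*} [AddCommGroup G] [AddCommGroup A]
    (z : G → G → G → G → A)
    (hcoc : ∀ x y w t x' y' w' t',
      z x y w t + z x' y' w' t' - z (x + x') (y + y') (w + w') (t + t')
        + z x w x' w' + z y t y' t'
        - z (x + y) (w + t) (x' + y') (w' + t')
      = z x y x' y' + z w t w' t' - z (x + w) (y + t) (x' + w') (y' + t'))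
    (hn1 : ∀ x y, z x y 0 0 = 0) (hn2 : ∀ x y, z 0 0 x y = 0) :
    ∀ x y w t, z x y w t + z x w y t = 0 :=
  IsCubicalCocycle.add_swap_middle_eq_zero hcoc hn1 hn2

theorem stmt_5 {G A : Type*} [AddCommGroup G] [AddCommGroup A]
    (z : G → G → G → G → A)
    (hcoc : ∀ x y w t x' y' w' t',
      z x y w t + z x' y' w' t' - z (x + x') (y + y') (w + w') (t + t')
        + z x w x' w' + z y t y' t'
        - z (x + y) (w + t) (x' + y') (w' + t')
      = z x y x' y' + z w t w' t' - z (x + w) (y + t) (x' + w') (y' + t'))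
    (hn1 : ∀ x y, z x y 0 0 = 0) (hn2 : ∀ x y, z 0 0 x y = 0)
    (hn3 : ∀ x y, z x 0 0 y = 0) (hn4 : ∀ x y, z 0 x 0 y = 0)
    (hn5 : ∀ x y, z x 0 y 0 = 0) :
    ∀ x y w t, z x y w t + z x w y t = 0 :=
  stmt_5_general z hcoc hn1 hn2
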